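/- arXiv:1506.01426 — 5 statements merged into one kernel-verified Lean document; each statement's English description precedes it below -/
import Mathlib

section
/- There exists a primitive element g in the free group F_m (m ≥ 2) with prescribed exponent sums A_i(g) = w_i for i = 1,...,m if and only if gcd(w_1, ..., w_m) = 1. -/
/-- The exponent sum of the generator `i` in a word of the free group,
packaged as a homomorphism to `Multiplicative ℤ`. -/
def expSum (m : ℕ) (i : Fin m) : FreeGroup (Fin m) →* Multiplicative ℤ :=
  FreeGroup.lift fun j => Multiplicative.ofAdd (if j = i then (1 : ℤ) else 0)

/-- An element of a group is primitive if it belongs to some generating set of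
minimal cardinality. -/
def IsPrimitiveEl {G : Type*} [Group G] (g : G) : Prop :=
  ∃ S : Finset G, g ∈ S ∧ Subgroup.closure (S : Set G) = ⊤ ∧
    ∀ T : Finset G, Subgroup.closure (T : Set G) = ⊤ → S.card ≤ T.card

/-!
Reducing exponent sums modulo a prime `p` maps `F_m` onto the vector space `(ℤ/p)^m`, so every
generating set of `F_m` has at least `m` elements outside the kernel. The free basis shows that
minimal generating sets have exactly `m` elements, so a member of one cannot lie in the kernel,
i.e. its exponent sums cannot all be divisible by `p`.

Conversely, the transvection `a_i ↦ a_i a_j^s` is a surjective endomorphism of `F_m` that adds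
`s` times the `i`-th exponent sum to the `j`-th one, so it maps `m`-element generating families to
`m`-element generating families. Run backwards, the Euclidean algorithm reaches any `w` of gcd `1`
from `±e_i`, the exponent vector of `a_i^{±1}` in the family obtained from the basis by replacing
`a_i` with `a_i^{±1}`.
-/

open Finset Multiplicative

namespace Finset

variable {ι : Type*}

lemma exists_prime_forall_dvd_of_gcd_ne_one {s : Finset ι} {f : ι → ℤ}
    (h : s.gcd f ≠ 1) : ∃ p : ℕ, p.Prime ∧ ∀ i ∈ s, (p : ℤ) ∣ f i := by
  have hnonneg : 0 ≤ s.gcd f := Int.nonneg_of_normalize_eq_self normalize_gcd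
  obtain ⟨p, hp, hpd⟩ := Nat.exists_prime_and_dvd (n := (s.gcd f).natAbs) (by omega)
  exact ⟨p, hp, fun i hi => (Int.natCast_dvd.2 hpd).trans (gcd_dvd hi)⟩

variable [Fintype ι] [DecidableEq ι]

lemma gcd_update_emod (f : ι → ℤ) {i j : ι} (hij : i ≠ j) :
    univ.gcd (Function.update f j (f j % f i)) = univ.gcd f := by
  refine dvd_antisymm_of_normalize_eq (α := ℤ) normalize_gcd normalize_gcd
    (dvd_gcd fun k _ => ?_) (dvd_gcd fun k _ => ?_)
  · by_cases hk : k = j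
    · subst hk
      have hdvd_i := gcd_dvd (f := Function.update f k (f k % f i)) (mem_univ i)
      have hdvd_k := gcd_dvd (f := Function.update f k (f k % f i)) (mem_univ k)
      rw [Function.update_of_ne hij] at hdvd_i
      rw [Function.update_self] at hdvd_k
      simpa only [Int.emod_add_mul_ediv] using dvd_add hdvd_k (hdvd_i.mul_right (f k / f i))
    · simpa [hk] using gcd_dvd (f := Function.update f j (f j % f i)) (mem_univ k)
  · by_cases hk : k = j
    · subst hk
      rw [Function.update_self, Int.emod_def]
      exact dvd_sub (gcd_dvd (mem_univ k)) ((gcd_dvd (mem_univ i)).mul_right _)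
    · simpa [hk] using gcd_dvd (mem_univ k)

lemma sum_natAbs_update_emod_lt (f : ι → ℤ) {i j : ι} (hi : f i ≠ 0)
    (hle : (f i).natAbs ≤ (f j).natAbs) :
    ∑ k, (Function.update f j (f j % f i) k).natAbs < ∑ k, (f k).natAbs := by
  have hlt : (f j % f i).natAbs < (f j).natAbs := by
    have h := Int.emod_lt_abs (f j) hi
    have h0 := Int.emod_nonneg (f j) hi
    rw [Int.abs_eq_natAbs] at h
    omega
  refine sum_lt_sum (fun k _ => ?_) ⟨j, mem_univ j, by simpa using hlt⟩
  by_cases hk : k = j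
  · subst hk; simpa using hlt.le
  · simp [hk]

end Finset

namespace FreeGroup

variable {ι : Type*}

section ExponentVector

variable [DecidableEq ι]

def exponentVector (K : Type*) [AddGroupWithOne K] : FreeGroup ι →* Multiplicative (ι → K) :=
  lift fun j => ofAdd (Pi.single j 1)

@[simp]
lemma toAdd_exponentVector_of (K : Type*) [AddGroupWithOne K] (j : ι) :
    toAdd (exponentVector K (of j)) = Pi.single j 1 := by
  simp [exponentVector]

lemma toAdd_exponentVector_apply (K : Type*) [AddGroupWithOne K] (g : FreeGroup ι) (i : ι) :
    toAdd (exponentVector K g) i = (toAdd (exponentVector ℤ g) i : K) := by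
  induction g with
  | C1 => simp
  | of j => by_cases h : i = j <;> simp [h]
  | inv_of j ih => simp only [_root_.map_inv, toAdd_inv, Pi.neg_apply, ih, Int.cast_neg]
  | mul x y hx hy => simp [hx, hy]

lemma span_exponentVector_image_eq_top (K : Type*) [Ring K] [Finite ι]
    {T : Set (FreeGroup ι)} (hT : Subgroup.closure T = ⊤) :
    Submodule.span K (toAdd ∘ exponentVector K '' T) = ⊤ := by
  set V := Submodule.span K (toAdd ∘ exponentVector K '' T)
  have hmem (g : FreeGroup ι) : toAdd (exponentVector K g) ∈ V := by
    induction (hT ▸ Subgroup.mem_top g : g ∈ Subgroup.closure T)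
      using Subgroup.closure_induction with
    | mem x hx => exact Submodule.subset_span ⟨x, hx, rfl⟩
    | one => simp
    | mul x y _ _ hx hy => simpa using V.add_mem hx hy
    | inv x _ hx => simpa using V.neg_mem hx
  rw [eq_top_iff, ← (Pi.basisFun K ι).span_eq, Submodule.span_le]
  rintro _ ⟨j, rfl⟩
  simpa using hmem (of j)

lemma card_le_card_filter_exponentVector_ne_one (K : Type*) [DivisionRing K] [DecidableEq K]
    [Fintype ι] {T : Finset (FreeGroup ι)}
    (hT : Subgroup.closure (T : Set (FreeGroup ι)) = ⊤) :
    Fintype.card ι ≤ #{t ∈ T | exponentVector K t ≠ 1} := by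
  set s := {t ∈ T | exponentVector K t ≠ 1}
  have hspan : Submodule.span K (s.image (toAdd ∘ exponentVector K) : Set (ι → K)) = ⊤ := by
    rw [← Submodule.span_insert_zero, eq_top_iff, ← span_exponentVector_image_eq_top K hT]
    refine Submodule.span_mono ?_
    rintro _ ⟨t, ht, rfl⟩
    by_cases h : exponentVector K t = 1
    · simp [h]
    · exact Set.mem_insert_of_mem _ (mem_image_of_mem _ (mem_filter.2 ⟨ht, h⟩))
  calc Fintype.card ι = Module.finrank K (ι → K) := (Module.finrank_fintype_fun_eq_card K).symm
    _ = (s.image (toAdd ∘ exponentVector K) : Set (ι → K)).finrank K := by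
      rw [Set.finrank, hspan, finrank_top]
    _ ≤ #(s.image (toAdd ∘ exponentVector K)) := finrank_span_finset_le_card _
    _ ≤ #s := card_image_le

theorem gcd_exponentVector_eq_one_of_isPrimitiveEl [Fintype ι] {g : FreeGroup ι}
    (hg : IsPrimitiveEl g) : univ.gcd (toAdd (exponentVector ℤ g)) = 1 := by
  obtain ⟨S, hgS, hS, hSmin⟩ := hg
  have hS_card : #S ≤ Fintype.card ι := by
    refine (hSmin (univ.image of) ?_).trans card_image_le
    simp [closure_range_of]
  by_contra hgcd
  obtain ⟨p, hp, hpdvd⟩ := exists_prime_forall_dvd_of_gcd_ne_one hgcd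
  have : Fact p.Prime := ⟨hp⟩
  have hg_ker : exponentVector (ZMod p) g = 1 := by
    refine toAdd.injective (funext fun i => ?_)
    rw [toAdd_exponentVector_apply, toAdd_one, Pi.zero_apply, ZMod.intCast_zmod_eq_zero_iff_dvd]
    exact hpdvd i (mem_univ i)
  have hlt : #{t ∈ S | exponentVector (ZMod p) t ≠ 1} < #S :=
    card_lt_card (filter_ssubset.2 ⟨g, hgS, not_not.2 hg_ker⟩)
  have := card_le_card_filter_exponentVector_ne_one (ZMod p) hS
  omega

end ExponentVector

lemma card_le_card_of_closure_eq_top [Fintype ι] {T : Finset (FreeGroup ι)}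
    (hT : Subgroup.closure (T : Set (FreeGroup ι)) = ⊤) : Fintype.card ι ≤ #T := by
  classical
  exact (card_le_card_filter_exponentVector_ne_one ℚ hT).trans (card_filter_le ..)

lemma isPrimitiveEl_of_closure_range_eq_top [Fintype ι] {b : ι → FreeGroup ι}
    (hb : Subgroup.closure (Set.range b) = ⊤) (k : ι) : IsPrimitiveEl (b k) := by
  classical
  exact ⟨univ.image b, mem_image_of_mem b (mem_univ k), by simpa using hb,
    fun _ hT => card_image_le.trans (card_le_card_of_closure_eq_top hT)⟩

section Transvection

variable [DecidableEq ι]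

def transvection (i j : ι) (s : ℤ) : FreeGroup ι →* FreeGroup ι :=
  lift (Function.update of i (of i * of j ^ s))

lemma transvection_comp_transvection_neg {i j : ι} (hij : i ≠ j) (s : ℤ) :
    (transvection i j s).comp (transvection i j (-s)) = MonoidHom.id _ := by
  ext k
  by_cases hk : k = i
  · subst hk
    simp [transvection, Function.update_of_ne hij.symm]
  · simp [transvection, hk]

lemma transvection_surjective {i j : ι} (hij : i ≠ j) (s : ℤ) :
    Function.Surjective (transvection i j s) :=
  fun x => ⟨transvection i j (-s) x,
    DFunLike.congr_fun (transvection_comp_transvection_neg hij s) x⟩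

lemma toAdd_exponentVector_transvection (i j : ι) (s : ℤ) (g : FreeGroup ι) :
    toAdd (exponentVector ℤ (transvection i j s g)) =
      toAdd (exponentVector ℤ g) + Pi.single j (s * toAdd (exponentVector ℤ g) i) := by
  induction g with
  | C1 => simp
  | of k =>
    by_cases hk : k = i
    · subst hk
      ext l
      by_cases hl : l = j <;> simp [transvection, hl]
    · simp [transvection, hk]
  | inv_of k ih => simp [ih, Pi.single_neg, add_comm]
  | mul x y hx hy => simp only [_root_.map_mul, toAdd_mul, hx, hy, Pi.add_apply, mul_add,
      Pi.single_add]; abel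

def IsExponentVectorOfGeneratingFamily (w : ι → ℤ) : Prop :=
  ∃ b : ι → FreeGroup ι, Subgroup.closure (Set.range b) = ⊤ ∧
    ∃ k, toAdd (exponentVector ℤ (b k)) = w

lemma isExponentVectorOfGeneratingFamily_single (i : ι) {u : ℤ} (hu : IsUnit u) :
    IsExponentVectorOfGeneratingFamily (Pi.single i u) := by
  refine ⟨Function.update of i (of i ^ u), ?_, i, ?_⟩
  swap
  · ext k
    by_cases hk : k = i <;> simp [hk]
  rw [eq_top_iff, ← closure_range_of, Subgroup.closure_le]
  rintro _ ⟨k, rfl⟩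
  by_cases hk : k = i
  · subst hk
    have hmem : of k ^ u ∈ Subgroup.closure (Set.range (Function.update of k (of k ^ u))) :=
      Subgroup.subset_closure ⟨k, by simp⟩
    simpa [← zpow_mul, Int.isUnit_mul_self hu] using Subgroup.zpow_mem _ hmem u
  · exact Subgroup.subset_closure ⟨k, by simp [hk]⟩

lemma IsExponentVectorOfGeneratingFamily.add_single {w : ι → ℤ}
    (h : IsExponentVectorOfGeneratingFamily w) {i j : ι} (hij : i ≠ j) (s : ℤ) :
    IsExponentVectorOfGeneratingFamily (w + Pi.single j (s * w i)) := by
  obtain ⟨b, hb, k, rfl⟩ := h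
  refine ⟨transvection i j s ∘ b, ?_, k, toAdd_exponentVector_transvection i j s (b k)⟩
  rw [Set.range_comp, ← MonoidHom.map_closure, hb, ← MonoidHom.range_eq_map,
    MonoidHom.range_eq_top]
  exact transvection_surjective hij s

lemma IsExponentVectorOfGeneratingFamily.of_update_emod {w : ι → ℤ} {i j : ι} (hij : i ≠ j)
    (h : IsExponentVectorOfGeneratingFamily (Function.update w j (w j % w i))) :
    IsExponentVectorOfGeneratingFamily w := by
  convert h.add_single hij (w j / w i) using 1
  ext k
  by_cases hk : k = j
  · subst hk
    simp [Function.update_of_ne hij, mul_comm, Int.emod_add_mul_ediv]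
  · simp [hk]

theorem isExponentVectorOfGeneratingFamily_of_gcd_eq_one [Fintype ι] {w : ι → ℤ}
    (hw : univ.gcd w = 1) : IsExponentVectorOfGeneratingFamily w := by
  induction hn : ∑ k, (w k).natAbs using Nat.strong_induction_on generalizing w with
  | _ n ih =>
  by_cases hpair : ∃ i j, i ≠ j ∧ w i ≠ 0 ∧ w j ≠ 0 ∧ (w i).natAbs ≤ (w j).natAbs
  · obtain ⟨i, j, hij, hi, -, hle⟩ := hpair
    exact .of_update_emod hij (ih _ (hn ▸ sum_natAbs_update_emod_lt w hi hle)
      ((gcd_update_emod w hij).trans hw) rfl)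
  push Not at hpair
  obtain ⟨i, hi⟩ : ∃ i, w i ≠ 0 := by
    by_contra! h
    simp [gcd_eq_zero_iff.2 fun k _ => h k] at hw
  have hw_single : w = Pi.single i (w i) := by
    ext k
    by_cases hk : k = i
    · simp [hk]
    · by_contra hwk
      rcases le_total (w k).natAbs (w i).natAbs with hle | hle
      · exact hpair k i hk (by simpa [hk] using hwk) hi |>.not_ge hle
      · exact hpair i k (Ne.symm hk) hi (by simpa [hk] using hwk) |>.not_ge hle
  have hunit : IsUnit (w i) := by
    refine isUnit_of_dvd_one (hw ▸ dvd_gcd fun k _ => ?_)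
    rw [hw_single]
    by_cases hk : k = i <;> simp [hk]
  rw [hw_single]
  exact isExponentVectorOfGeneratingFamily_single i hunit

end Transvection

end FreeGroup

lemma toAdd_expSum (m : ℕ) (i : Fin m) (g : FreeGroup (Fin m)) :
    toAdd (expSum m i g) = toAdd (FreeGroup.exponentVector ℤ g) i := by
  induction g with
  | C1 => simp
  | of j =>
    by_cases h : j = i
    · simp [expSum, h]
    · simp [expSum, h, Ne.symm h]
  | inv_of j ih => simp [ih]
  | mul x y hx hy => simp [hx, hy]

theorem primitive_with_weights_iff_gcd_one_general (m : ℕ) (w : Fin m → ℤ) :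
    (∃ g : FreeGroup (Fin m), IsPrimitiveEl g ∧
        ∀ i : Fin m, Multiplicative.toAdd (expSum m i g) = w i)
      ↔ Finset.univ.gcd w = 1 := by
  simp only [toAdd_expSum, ← funext_iff]
  constructor
  · rintro ⟨g, hg, rfl⟩
    exact FreeGroup.gcd_exponentVector_eq_one_of_isPrimitiveEl hg
  · intro hw
    obtain ⟨b, hb, k, hbk⟩ := FreeGroup.isExponentVectorOfGeneratingFamily_of_gcd_eq_one hw
    exact ⟨b k, FreeGroup.isPrimitiveEl_of_closure_range_eq_top hb k, hbk⟩

/-- There is a primitive element of `F_m` with prescribed exponent sums `w i`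
if and only if `gcd (w 1, …, w m) = 1`. -/
theorem primitive_with_weights_iff_gcd_one (m : ℕ) (hm : 2 ≤ m) (w : Fin m → ℤ) :
    (∃ g : FreeGroup (Fin m), IsPrimitiveEl g ∧
        ∀ i : Fin m, Multiplicative.toAdd (expSum m i g) = w i)
      ↔ Finset.univ.gcd w = 1 :=
  primitive_with_weights_iff_gcd_one_general m w
end

section
/- Let K be a subgroup of Z^m generated by r vectors, and let d be the gcd of all rm coordinate entries of the generating vectors. Then d = min over nonzero w ∈ K of gcd(w), i.e., there exists a vector in K whose entries have gcd equal to d, and every nonzero vector of K has entries with gcd divisible by d. In particular, K contains a primitive vector if and only if the gcd of all rm entries is 1. -/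
/-!
Choose bases of `ℤ^m` and of `K` in Smith normal form, so that `K` is spanned by multiples
`aᵢ eᵢ` of part of a basis `e` of `ℤ^m`. In the coordinates of `e`, the vector `∑ aᵢ eᵢ ∈ K`
divides every vector of `K` coordinatewise, and the gcd of the coordinates of a vector does
not depend on the basis, since each coordinate in one basis is an integer combination of the
coordinates in the other. So the gcd of the coordinates of `∑ aᵢ eᵢ` divides that of every
vector of `K`, in particular every entry of the generators; conversely the gcd `d` of these
entries divides every coordinate of every vector of `K`.
-/

open Finset Submodule

section GCDCoordinates

variable {R ι : Type*} [CommRing R]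

theorem Submodule.dvd_apply_of_mem_span {κ : Type*} {v : κ → ι → R} {c : R}
    (hv : ∀ i j, c ∣ v i j) {x : ι → R} (hx : x ∈ span R (Set.range v)) (j : ι) :
    c ∣ x j := by
  have hle : span R (Set.range v) ≤ Submodule.pi Set.univ fun _ : ι => Ideal.span {c} :=
    span_le.2 <| by
      rintro _ ⟨i, rfl⟩ j -
      exact Ideal.mem_span_singleton.2 (hv i j)
  exact Ideal.mem_span_singleton.1 (hle hx j trivial)

theorem Finset.gcd_dvd_linearMap_apply [IsDomain R] [NormalizedGCDMonoid R] [Fintype ι]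
    (φ : (ι → R) →ₗ[R] R) (w : ι → R) : univ.gcd w ∣ φ w := by
  classical
  rw [LinearMap.pi_apply_eq_sum_univ]
  exact dvd_sum fun i _ => dvd_mul_of_dvd_left (gcd_dvd (mem_univ i)) _

variable [IsDomain R] [NormalizedGCDMonoid R] [Fintype ι]

theorem Module.Basis.gcd_equivFun {κ : Type*} [Fintype κ] (b : Module.Basis κ R (ι → R))
    (w : ι → R) : univ.gcd (b.equivFun w) = univ.gcd w := by
  refine dvd_antisymm_of_normalize_eq normalize_gcd normalize_gcd
    (Finset.dvd_gcd fun j _ => ?_) (Finset.dvd_gcd fun k _ => ?_)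
  · have := gcd_dvd_linearMap_apply (LinearMap.proj j ∘ₗ b.equivFun.symm.toLinearMap)
      (b.equivFun w)
    rwa [LinearMap.comp_apply, LinearEquiv.coe_coe, LinearEquiv.symm_apply_apply,
      LinearMap.proj_apply] at this
  · exact gcd_dvd_linearMap_apply (LinearMap.proj k ∘ₗ b.equivFun.toLinearMap) w

variable [IsPrincipalIdealRing R]

theorem Submodule.exists_mem_forall_gcd_dvd (N : Submodule R (ι → R)) :
    ∃ w ∈ N, ∀ x ∈ N, univ.gcd w ∣ univ.gcd x := by
  obtain ⟨n, snf⟩ := N.smithNormalForm (Pi.basisFun R ι)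
  let w : N := snf.bN.equivFun.symm 1
  refine ⟨w, w.2, fun x hx => ?_⟩
  rw [← snf.bM.gcd_equivFun w, ← snf.bM.gcd_equivFun x]
  refine gcd_mono_fun fun k _ => ?_
  by_cases hk : k ∈ Set.range snf.f
  · obtain ⟨i, rfl⟩ := hk
    have hw : snf.bN.repr w i = 1 := by simp [w]
    simp only [Module.Basis.equivFun_apply]
    rw [← Subtype.coe_mk x hx, snf.repr_apply_embedding_eq_repr_smul,
      snf.repr_apply_embedding_eq_repr_smul, map_smul, map_smul, Finsupp.smul_apply,
      Finsupp.smul_apply, hw, smul_eq_mul, smul_eq_mul, mul_one]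
    exact dvd_mul_right _ _
  · simp [snf.repr_eq_zero_of_notMem_range ⟨x, hx⟩ hk]

theorem Submodule.exists_mem_span_gcd_eq {κ : Type*} [Fintype κ] (v : κ → ι → R) :
    ∃ w ∈ span R (Set.range v), univ.gcd w = univ.gcd fun p : κ × ι => v p.1 p.2 := by
  obtain ⟨w, hw, hdvd⟩ := (span R (Set.range v)).exists_mem_forall_gcd_dvd
  refine ⟨w, hw, dvd_antisymm_of_normalize_eq normalize_gcd normalize_gcd
    (Finset.dvd_gcd fun p _ => ?_) (Finset.dvd_gcd fun j _ => ?_)⟩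
  · exact (hdvd _ (subset_span ⟨p.1, rfl⟩)).trans (gcd_dvd (mem_univ p.2))
  · exact dvd_apply_of_mem_span (fun i j => gcd_dvd (mem_univ (i, j))) hw j

end GCDCoordinates

/-- Criterion for the existence of a primitive vector: let `K ≤ ℤ^m` be generated by
`r` vectors and let `d` be the gcd of all `r·m` coordinate entries.  Then some vector
of `K` has entries with gcd exactly `d`, every nonzero vector of `K` has entries whose
gcd is divisible by `d`, and `K` contains a primitive vector iff `d = 1`. -/
theorem gcd_span_criterion (m r : ℕ) (v : Fin r → Fin m → ℤ) :
    let K := AddSubgroup.closure (Set.range v)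
    let d := Finset.univ.gcd (fun p : Fin r × Fin m => v p.1 p.2)
    (∃ w ∈ K, Finset.univ.gcd w = d) ∧
    (∀ w ∈ K, w ≠ 0 → d ∣ Finset.univ.gcd w) ∧
    ((∃ w ∈ K, Finset.univ.gcd w = 1) ↔ d = 1) := by
  intro K d
  have hK : ∀ w, w ∈ K ↔ w ∈ span ℤ (Set.range v) := fun w => by
    rw [show K = _ from (span_int_eq_addSubgroupClosure _).symm]; rfl
  have hdvd : ∀ w ∈ K, d ∣ univ.gcd w := fun w hw =>
    Finset.dvd_gcd fun j _ =>
      dvd_apply_of_mem_span (fun i j => gcd_dvd (mem_univ (i, j))) ((hK w).1 hw) j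
  obtain ⟨w, hw, hwd⟩ := exists_mem_span_gcd_eq v
  refine ⟨⟨w, (hK w).2 hw, hwd⟩, fun w hw _ => hdvd w hw,
    fun ⟨u, hu, hu1⟩ => ?_, fun hd => ⟨w, (hK w).2 hw, hwd.trans hd⟩⟩
  show univ.gcd _ = 1
  rw [← Finset.normalize_gcd, normalize_eq_one]
  exact isUnit_of_dvd_one (hu1 ▸ hdvd u hu)
end

section
/- Let H be the free s-step nilpotent group of rank m and K a normal subgroup of H. If the rank of H/K is strictly less than m, then K contains an element whose abelianization is a primitive vector of Z^m. -/
/-! Let `L ⊆ ℤ^m` be the image of `K` under abelianization. If `L ⊆ pℤ^m` for a prime `p`,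
then `H ⧸ K` surjects onto `(ℤ/p)^m` and so needs at least `m` generators. Hence no prime
divides all the diagonal entries `aᵢ` of a Smith normal form `L = ⊕ ℤ aᵢ eᵢ`, i.e.
`gcd aᵢ = 1`, and a Bézout combination of the coordinate functionals of the `eᵢ` sends
`∑ aᵢ eᵢ ∈ L` to `1`, which makes that vector primitive. -/

/-- The free `s`-step nilpotent group on `m` generators. -/
abbrev FreeNilpotentGroup (s m : ℕ) :=
  FreeGroup (Fin m) ⧸ (⊤ : Subgroup (FreeGroup (Fin m))).lowerCentralSeries s

/-- The `i`-th abelianization coordinate of an element of the free nilpotent group. -/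
def coordMap (s m : ℕ) (hs : 1 ≤ s) (i : Fin m) :
    FreeNilpotentGroup s m →* Multiplicative ℤ :=
  QuotientGroup.lift _ (expSum m i) (by
    intro x hx
    have h1 : (⊤ : Subgroup (FreeGroup (Fin m))).lowerCentralSeries s ≤
        (⊤ : Subgroup (FreeGroup (Fin m))).lowerCentralSeries 1 := Subgroup.lowerCentralSeries_antitone _ hs
    have h2 : (⊤ : Subgroup (FreeGroup (Fin m))).lowerCentralSeries 1 ≤ (expSum m i).ker := by
      rw [Subgroup.top_lowerCentralSeries_one]
      exact Abelianization.commutator_subset_ker (expSum m i)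
    exact h2 (h1 hx))

/-- The rank of a group: the minimal cardinality of a (finite) generating set,
as an extended natural number. -/
noncomputable def rankOf (G : Type*) [Group G] : ℕ∞ :=
  ⨅ (S : Finset G) (_ : Subgroup.closure (S : Set G) = ⊤), (S.card : ℕ∞)

theorem gcd_eq_one_of_linearMap_apply_eq_one {R ι : Type*} [CommRing R] [NormalizedGCDMonoid R]
    [Fintype ι] {v : ι → R} (φ : (ι → R) →ₗ[R] R) (h : φ v = 1) :
    Finset.univ.gcd v = 1 := by
  classical
  have hdvd : Finset.univ.gcd v ∣ φ v := by
    rw [φ.pi_apply_eq_sum_univ]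
    exact Finset.dvd_sum fun j _ => (Finset.gcd_dvd (Finset.mem_univ j)).mul_right _
  rw [← Finset.normalize_gcd, normalize_eq_one]
  exact isUnit_of_dvd_one (h ▸ hdvd)

namespace Module.Basis.SmithNormalForm

variable {R ι : Type*} [CommRing R] {L : Submodule R (ι → R)} {n : ℕ}
  (snf : Basis.SmithNormalForm L ι n)

theorem dvd_apply_of_forall_dvd {q : R} (hq : ∀ i, q ∣ snf.a i) {v : ι → R} (hv : v ∈ L)
    (j : ι) : q ∣ v j := by
  obtain ⟨c, rfl⟩ := (snf.bN.mem_submodule_iff').mp hv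
  simp only [snf.snf, Finset.sum_apply, Pi.smul_apply, smul_eq_mul]
  exact Finset.dvd_sum fun i _ => ((hq i).mul_right _).mul_left _

theorem repr_sum_bN_apply_embedding (i : Fin n) :
    snf.bM.repr (∑ k, (snf.bN k : ι → R)) (snf.f i) = snf.a i := by
  classical
  simp [map_sum, Finsupp.single_apply]

end Module.Basis.SmithNormalForm

theorem Submodule.exists_gcd_eq_one_of_forall_prime {ι : Type*} [Fintype ι]
    (L : Submodule ℤ (ι → ℤ))
    (hL : ∀ p : ℕ, p.Prime → ∃ v ∈ L, ∃ i, ¬ (p : ℤ) ∣ v i) :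
    ∃ v ∈ L, Finset.univ.gcd v = 1 := by
  obtain ⟨n, snf⟩ := L.smithNormalForm (Pi.basisFun ℤ ι)
  have ha : Finset.univ.gcd snf.a = 1 := by
    by_contra hne
    have hnonneg : 0 ≤ Finset.univ.gcd snf.a :=
      Int.nonneg_of_normalize_eq_self (Finset.normalize_gcd)
    obtain ⟨p, hp, hpa⟩ :=
      Nat.exists_prime_and_dvd (n := (Finset.univ.gcd snf.a).natAbs) (by omega)
    obtain ⟨v, hv, j, hvj⟩ := hL p hp
    exact hvj (snf.dvd_apply_of_forall_dvd
      (fun i => (Int.natCast_dvd.mpr hpa).trans (Finset.gcd_dvd (Finset.mem_univ i))) hv j)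
  obtain ⟨c, hc⟩ := Finset.univ.gcd_eq_sum_mul snf.a
  refine ⟨∑ k, snf.bN k, L.sum_mem fun k _ => (snf.bN k).2,
    gcd_eq_one_of_linearMap_apply_eq_one (∑ i, c i • snf.bM.coord (snf.f i)) ?_⟩
  simp only [LinearMap.sum_apply, LinearMap.smul_apply,
    Module.Basis.coord_apply, snf.repr_sum_bN_apply_embedding, smul_eq_mul]
  rw [← ha, hc]
  exact Finset.sum_congr rfl fun i _ => mul_comm _ _

theorem finrank_le_rankOf_of_surjective {G K V : Type*} [Group G] [DivisionRing K]
    [AddCommGroup V] [Module K V] (f : G →* Multiplicative V) (hf : Function.Surjective f) :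
    (Module.finrank K V : ℕ∞) ≤ rankOf G := by
  classical
  unfold rankOf
  refine le_iInf₂ fun S hS => ?_
  set T : Finset V := S.image fun x => (f x).toAdd
  have hclosure : Subgroup.closure (f '' S) = ⊤ := by
    rw [← MonoidHom.map_closure, hS, ← MonoidHom.range_eq_map, MonoidHom.range_eq_top.mpr hf]
  have hspan : Submodule.span K (T : Set V) = ⊤ := by
    refine eq_top_iff.mpr fun v _ => ?_
    have hle : Subgroup.closure (f '' S) ≤
        AddSubgroup.toSubgroup (Submodule.span K (T : Set V)).toAddSubgroup := by
      refine Subgroup.closure_le _ |>.mpr ?_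
      rintro _ ⟨x, hx, rfl⟩
      show (f x).toAdd ∈ Submodule.span K (T : Set V)
      exact Submodule.subset_span (Finset.mem_image_of_mem _ hx)
    exact hle (hclosure ▸ Subgroup.mem_top (Multiplicative.ofAdd v))
  have hcard : Module.finrank K V ≤ S.card := calc
    Module.finrank K V = (T : Set V).finrank K := by rw [Set.finrank, hspan, finrank_top]
    _ ≤ T.card := finrank_span_finset_le_card T
    _ ≤ S.card := Finset.card_image_le
  exact_mod_cast hcard

def coordVec (s m : ℕ) (hs : 1 ≤ s) : Additive (FreeNilpotentGroup s m) →+ (Fin m → ℤ) :=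
  AddMonoidHom.pi fun i => MonoidHom.toAdditiveLeft (coordMap s m hs i)

theorem coordVec_of (s m : ℕ) (hs : 1 ≤ s) (i : Fin m) :
    coordVec s m hs (.ofMul (QuotientGroup.mk (FreeGroup.of i))) = Pi.single i 1 := by
  funext j
  simp [coordVec, coordMap, expSum, Pi.single_apply, eq_comm]

theorem coordVec_surjective (s m : ℕ) (hs : 1 ≤ s) : Function.Surjective (coordVec s m hs) := by
  classical
  intro v
  have hsingle : ∀ i, Pi.single i (v i) ∈ (coordVec s m hs).range := fun i => by
    rw [← mul_one (v i), ← smul_eq_mul, Pi.single_smul, ← coordVec_of s m hs i]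
    exact zsmul_mem (AddMonoidHom.mem_range.mpr ⟨_, rfl⟩) _
  rw [← AddMonoidHom.mem_range, ← Finset.univ_sum_single v]
  exact sum_mem fun i _ => hsingle i

theorem exists_coordVec_not_dvd_of_rankOf_lt (s m : ℕ) (hs : 1 ≤ s)
    (K : Subgroup (FreeNilpotentGroup s m)) [K.Normal]
    (h : rankOf (FreeNilpotentGroup s m ⧸ K) < (m : ℕ∞)) {p : ℕ} (hp : p.Prime) :
    ∃ x ∈ K, ∃ i, ¬ (p : ℤ) ∣ coordVec s m hs (.ofMul x) i := by
  have : Fact p.Prime := ⟨hp⟩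
  by_contra! hdvd
  let reduce : Additive (FreeNilpotentGroup s m) →+ (Fin m → ZMod p) :=
    ((Int.castAddHom (ZMod p)).compLeft (Fin m)).comp (coordVec s m hs)
  have hK : K ≤ (AddMonoidHom.toMultiplicativeRight reduce).ker := fun x hx => by
    refine congrArg Multiplicative.ofAdd (funext fun i => ?_)
    exact (ZMod.intCast_zmod_eq_zero_iff_dvd _ p).mpr (hdvd x hx i)
  have hsurj : Function.Surjective (QuotientGroup.lift K _ hK) :=
    QuotientGroup.lift_surjective_of_surjective _ _
      ((ZMod.intCast_surjective.comp_left).comp (coordVec_surjective s m hs)) hK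
  have hrank := finrank_le_rankOf_of_surjective (K := ZMod p) _ hsurj
  rw [Module.finrank_fin_fun] at hrank
  exact (h.trans_le hrank).false

/-- Killing a primitive element: if `K` is a normal subgroup of the free `s`-step
nilpotent group of rank `m` and the quotient has rank `< m`, then `K` contains an
element whose abelianization is a primitive vector of `ℤ^m`. -/
theorem normal_subgroup_contains_primitive_of_rank_lt (s m : ℕ) (hs : 1 ≤ s)
    (K : Subgroup (FreeNilpotentGroup s m)) [K.Normal]
    (h : rankOf (FreeNilpotentGroup s m ⧸ K) < (m : ℕ∞)) :
    ∃ x ∈ K,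
      Finset.univ.gcd (fun i => Multiplicative.toAdd (coordMap s m hs i x)) = 1 := by
  obtain ⟨v, hv, hgcd⟩ := Submodule.exists_gcd_eq_one_of_forall_prime
    (K.toAddSubgroup.map (coordVec s m hs)).toIntSubmodule fun p hp => by
      obtain ⟨x, hx, hndvd⟩ := exists_coordVec_not_dvd_of_rankOf_lt s m hs K h hp
      exact ⟨_, ⟨.ofMul x, hx, rfl⟩, hndvd⟩
  obtain ⟨x, hx, rfl⟩ := hv
  exact ⟨x.toMul, hx, hgcd⟩
end

section
/- Suppose u_1,...,u_n ∈ Z^m and v is a primitive vector lying in the Z-span of u_1,...,u_n. Then there exist v_2,...,v_n ∈ Z^m such that the Z-span of {v, v_2, ..., v_n} equals the Z-span of {u_1, ..., u_n}. -/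
/-!
Write `v = φ a` with `φ : ℤⁿ → ℤᵐ` the map sending the standard basis to the `uᵢ`. A Bézout
relation `∑ dⱼ vⱼ = 1` gives a functional `f` on `ℤⁿ` with `f a = 1`, so `ℤⁿ = ℤ a ⊕ ker f`.
As a submodule of `ℤⁿ`, `ker f` is free of rank `n - 1`; the images under `φ` of `a` and of a
basis of `ker f` generate `φ(ℤⁿ) = span(u)`.
-/

open Module Submodule

theorem LinearMap.span_singleton_sup_ker_eq_top_of_apply_eq_one {R M : Type*} [Ring R]
    [AddCommGroup M] [Module R M] {f : M →ₗ[R] R} {x : M} (hfx : f x = 1) :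
    R ∙ x ⊔ ker f = ⊤ :=
  top_unique fun y _ => mem_sup.mpr ⟨f y • x, mem_span_singleton.mpr ⟨_, rfl⟩,
    y - f y • x, by simp [hfx], add_sub_cancel _ _⟩

theorem LinearMap.finrank_ker_add_one_of_surjective {R M : Type*} [CommRing R] [IsDomain R]
    [AddCommGroup M] [Module R M] [Module.Finite R M] {f : M →ₗ[R] R}
    (hf : Function.Surjective f) : finrank R (ker f) + 1 = finrank R M := by
  rw [← (ker f).finrank_quotient_add_finrank, add_comm,
    (f.quotKerEquivOfSurjective hf).finrank_eq, finrank_self]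

section PID

variable {R : Type*} [CommRing R] [IsDomain R] [IsPrincipalIdealRing R]

theorem exists_span_insert_eq_top_of_apply_eq_one {M : Type*} [AddCommGroup M] [Module R M]
    [Module.Free R M] [Module.Finite R M] {f : M →ₗ[R] R} {x : M} (hfx : f x = 1) :
    ∃ b : Fin (finrank R M - 1) → M, span R (insert x (Set.range b)) = ⊤ := by
  have hrank : finrank R (LinearMap.ker f) = finrank R M - 1 := by
    have := LinearMap.finrank_ker_add_one_of_surjective (f := f) fun r => ⟨r • x, by simp [hfx]⟩
    omega
  let b := finBasisOfFinrankEq R (LinearMap.ker f) hrank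
  refine ⟨(LinearMap.ker f).subtype ∘ b, ?_⟩
  rw [span_insert, Set.range_comp, ← map_span, b.span_eq, map_subtype_top,
    LinearMap.span_singleton_sup_ker_eq_top_of_apply_eq_one hfx]

theorem exists_span_insert_eq_span_range_of_apply_eq_one {N : Type*} [AddCommGroup N]
    [Module R N] {n : ℕ} {u : Fin n → N} {v : N} (hv : v ∈ span R (Set.range u))
    {g : N →ₗ[R] R} (hgv : g v = 1) :
    ∃ vs : Fin (n - 1) → N, span R (insert v (Set.range vs)) = span R (Set.range u) := by
  let φ := Fintype.linearCombination R u
  have hφ : LinearMap.range φ = span R (Set.range u) := Fintype.range_linearCombination R u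
  obtain ⟨a, rfl⟩ : v ∈ LinearMap.range φ := hφ ▸ hv
  have hext := exists_span_insert_eq_top_of_apply_eq_one (f := g ∘ₗ φ) hgv
  rw [finrank_fin_fun] at hext
  obtain ⟨b, hb⟩ := hext
  refine ⟨φ ∘ b, ?_⟩
  rw [Set.range_comp, ← Set.image_insert_eq, ← map_span, hb, Submodule.map_top, hφ]

end PID

theorem exists_linearMap_apply_eq_one_of_gcd_eq_one {R ι : Type*} [CommRing R] [IsBezout R]
    [NormalizedGCDMonoid R] [Fintype ι] {v : ι → R} (hv : Finset.univ.gcd v = 1) :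
    ∃ g : (ι → R) →ₗ[R] R, g v = 1 := by
  obtain ⟨d, hd⟩ := Finset.gcd_eq_sum_mul Finset.univ v
  exact ⟨Fintype.linearCombination R d, by simp [Fintype.linearCombination_apply, ← hv, hd]⟩

/-- Linear algebra lemma: if `v` is a primitive vector in the ℤ-span of
`u_1, …, u_n ⊆ ℤ^m`, then there are `v_2, …, v_n` with
`span(v, v_2, …, v_n) = span(u_1, …, u_n)`. -/
theorem primitive_in_span_extends (m n : ℕ) (u : Fin n → Fin m → ℤ) (v : Fin m → ℤ)
    (hv : Finset.univ.gcd v = 1) (hmem : v ∈ AddSubgroup.closure (Set.range u)) :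
    ∃ vs : Fin (n - 1) → Fin m → ℤ,
      AddSubgroup.closure ({v} ∪ Set.range vs) = AddSubgroup.closure (Set.range u) := by
  obtain ⟨g, hgv⟩ := exists_linearMap_apply_eq_one_of_gcd_eq_one hv
  rw [← span_int_eq_addSubgroupClosure, mem_toAddSubgroup] at hmem
  obtain ⟨vs, hvs⟩ := exists_span_insert_eq_span_range_of_apply_eq_one hmem hgv
  refine ⟨vs, ?_⟩
  rw [Set.singleton_union, ← span_int_eq_addSubgroupClosure, ← span_int_eq_addSubgroupClosure,
    hvs]
end

section
/- In a nilpotent group G, if every generator a_i of a finite generating set has a power lying in the commutator subgroup G_2 = [G,G], then for every j, every element of the j-th lower central series term G_j has a finite power lying in G_{j+1}. -/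
/-!
Let `e` be a common positive exponent with `aᵢ ^ e ∈ [G,G]` for all `i`; we show that
`g ^ e ∈ G_{j+1}` for all `g ∈ G_j`. Modulo `G_{j+2}` the group `G_{j+1}` is central, so the
`e`-th power map is a homomorphism on the subgroup generated by its generators `⁅x, y⁆`
(`x ∈ G_j`), and `⁅x, y⁆ ^ e ≡ ⁅x ^ e, y⁆`, which lies in `G_{j+2}` by induction. The same
argument modulo `[G,G]`, applied to the generators `aᵢ`, gives the case `j = 0`.
-/

open scoped commutatorElement

section

open Subgroup

variable {G : Type*} [Group G]

theorem exists_pos_pow_mem_of_forall {ι : Type*} [Finite ι] {f : ι → G} {H : Subgroup G}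
    (h : ∀ i, ∃ k : ℕ, 0 < k ∧ f i ^ k ∈ H) : ∃ e : ℕ, 0 < e ∧ ∀ i, f i ^ e ∈ H := by
  have := Fintype.ofFinite ι
  choose k hk_pos hk using h
  refine ⟨∏ i, k i, Finset.prod_pos fun i _ => hk_pos i, fun i => ?_⟩
  obtain ⟨m, hm⟩ := Finset.dvd_prod_of_mem k (Finset.mem_univ i)
  rw [hm, pow_mul]
  exact H.pow_mem (hk i) m

theorem pow_eq_one_of_mem_closure_of_subset_center {S : Set G} (hS : S ⊆ center G) {e : ℕ}
    (hSe : ∀ s ∈ S, s ^ e = 1) {g : G} (hg : g ∈ closure S) : g ^ e = 1 := by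
  have hcenter : closure S ≤ center G := (closure_le _).mpr hS
  induction hg using closure_induction with
  | mem s hs => exact hSe s hs
  | one => exact one_pow e
  | mul x y hx _ hxe hye =>
    have hxy : Commute y x := mem_center_iff.mp (hcenter hx) y
    rw [hxy.symm.mul_pow, hxe, hye, one_mul]
  | inv x _ hxe => rw [inv_pow, hxe, inv_one]

theorem QuotientGroup.mk_mem_center {N : Subgroup G} [N.Normal] {s : G}
    (hs : ∀ g : G, ⁅s, g⁆ ∈ N) : (s : G ⧸ N) ∈ center (G ⧸ N) := by
  refine mem_center_iff.mpr fun z => ?_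
  induction z using QuotientGroup.induction_on with
  | H g =>
    have : ⁅(s : G ⧸ N), (g : G ⧸ N)⁆ = 1 := (QuotientGroup.eq_one_iff _).mpr (hs g)
    exact (commutatorElement_eq_one_iff_mul_comm.mp this).symm

theorem pow_mem_of_mem_closure_of_commutatorElement_mem {N : Subgroup G} [N.Normal] {S : Set G}
    (hSN : ∀ s ∈ S, ∀ g : G, ⁅s, g⁆ ∈ N) {e : ℕ} (hSe : ∀ s ∈ S, s ^ e ∈ N) {g : G}
    (hg : g ∈ closure S) : g ^ e ∈ N := by
  let π := QuotientGroup.mk' N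
  have hπg : π g ∈ closure (π '' S) := by
    rw [← MonoidHom.map_closure]
    exact mem_map_of_mem π hg
  rw [← QuotientGroup.eq_one_iff, QuotientGroup.mk_pow]
  refine pow_eq_one_of_mem_closure_of_subset_center ?_ ?_ hπg
  · rintro _ ⟨s, hs, rfl⟩
    exact QuotientGroup.mk_mem_center (hSN s hs)
  · rintro _ ⟨s, hs, rfl⟩
    rw [← map_pow]
    exact (QuotientGroup.eq_one_iff _).mpr (hSe s hs)

theorem commutatorElement_pow_of_commute {x y : G} (h : ∀ m : ℕ, Commute x ⁅x ^ m, y⁆)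
    (e : ℕ) : ⁅x, y⁆ ^ e = ⁅x ^ e, y⁆ := by
  induction e with
  | zero => simp
  | succ m ih =>
    have hsucc : ⁅x ^ (m + 1), y⁆ = x * ⁅x ^ m, y⁆ * x⁻¹ * ⁅x, y⁆ := by
      simp only [commutatorElement_def, pow_succ']
      group
    rw [pow_succ, ih, hsucc, (h m).eq, mul_inv_cancel_right]

theorem commutatorElement_mem_lowerCentralSeries_succ {n : ℕ} {x : G}
    (hx : x ∈ (⊤ : Subgroup G).lowerCentralSeries n) (g : G) :
    ⁅x, g⁆ ∈ (⊤ : Subgroup G).lowerCentralSeries (n + 1) :=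
  commutator_mem_commutator hx (mem_top g)

theorem pow_mem_lowerCentralSeries_add_two {j e : ℕ}
    (ih : ∀ x ∈ (⊤ : Subgroup G).lowerCentralSeries j,
      x ^ e ∈ (⊤ : Subgroup G).lowerCentralSeries (j + 1))
    {g : G} (hg : g ∈ (⊤ : Subgroup G).lowerCentralSeries (j + 1)) :
    g ^ e ∈ (⊤ : Subgroup G).lowerCentralSeries (j + 2) := by
  rw [Subgroup.mem_lowerCentralSeries_succ_iff] at hg
  refine pow_mem_of_mem_closure_of_commutatorElement_mem (fun s hs =>
    commutatorElement_mem_lowerCentralSeries_succ (n := j + 1) (subset_closure hs)) ?_ hg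
  rintro _ ⟨x, hx, y, -, rfl⟩
  let π := QuotientGroup.mk' ((⊤ : Subgroup G).lowerCentralSeries (j + 2))
  have hcomm : ∀ m : ℕ, Commute (π x) ⁅π x ^ m, π y⁆ := fun m => by
    rw [← map_pow, ← map_commutatorElement]
    exact (mem_center_iff.mp (QuotientGroup.mk_mem_center
      (commutatorElement_mem_lowerCentralSeries_succ
        (commutatorElement_mem_lowerCentralSeries_succ (pow_mem hx m) y))) (π x))
  have hpow : π (⁅x, y⁆ ^ e) = π ⁅x ^ e, y⁆ := by
    rw [map_pow, map_commutatorElement, commutatorElement_pow_of_commute hcomm,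
      ← map_pow, map_commutatorElement]
  have hmem : ⁅x ^ e, y⁆ ∈ (⊤ : Subgroup G).lowerCentralSeries (j + 2) :=
    commutatorElement_mem_lowerCentralSeries_succ (ih x hx) y
  exact (QuotientGroup.eq_one_iff _).mp (hpow.trans ((QuotientGroup.eq_one_iff _).mpr hmem))

theorem pow_mem_lowerCentralSeries_succ {e : ℕ}
    (h : ∀ g : G, g ^ e ∈ (⊤ : Subgroup G).lowerCentralSeries 1) (j : ℕ) :
    ∀ g ∈ (⊤ : Subgroup G).lowerCentralSeries j,
      g ^ e ∈ (⊤ : Subgroup G).lowerCentralSeries (j + 1) := by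
  induction j with
  | zero => exact fun g _ => h g
  | succ j ih => exact fun g hg => pow_mem_lowerCentralSeries_add_two ih hg

end

theorem pow_in_next_lcs_of_generators_pow_in_commutator_general
    (G : Type*) [Group G] (n : ℕ) (a : Fin n → G)
    (hgen : Subgroup.closure (Set.range a) = ⊤)
    (hpow : ∀ i, ∃ k : ℕ, 0 < k ∧ a i ^ k ∈ Subgroup.lowerCentralSeries (⊤ : Subgroup G) 1) :
    ∀ j : ℕ, ∀ g ∈ Subgroup.lowerCentralSeries (⊤ : Subgroup G) j,
      ∃ k : ℕ, 0 < k ∧ g ^ k ∈ Subgroup.lowerCentralSeries (⊤ : Subgroup G) (j + 1) := by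
  obtain ⟨e, he, hae⟩ := exists_pos_pow_mem_of_forall hpow
  have hbase : ∀ g : G, g ^ e ∈ Subgroup.lowerCentralSeries (⊤ : Subgroup G) 1 := fun g =>
    pow_mem_of_mem_closure_of_commutatorElement_mem
      (fun s _ => commutatorElement_mem_lowerCentralSeries_succ (Subgroup.mem_top s))
      (by rintro _ ⟨i, rfl⟩; exact hae i) (hgen ▸ Subgroup.mem_top g)
  exact fun j g hg => ⟨e, he, pow_mem_lowerCentralSeries_succ hbase j g hg⟩

/-- In a nilpotent group, if every member of a finite generating set has a positive
power in the commutator subgroup `[G,G] = lowerCentralSeries G 1`, then for every `j`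
every element of `lowerCentralSeries G j` has a positive power in
`lowerCentralSeries G (j+1)`. -/
theorem pow_in_next_lcs_of_generators_pow_in_commutator
    (G : Type*) [Group G] [Group.IsNilpotent G] (n : ℕ) (a : Fin n → G)
    (hgen : Subgroup.closure (Set.range a) = ⊤)
    (hpow : ∀ i, ∃ k : ℕ, 0 < k ∧ a i ^ k ∈ Subgroup.lowerCentralSeries (⊤ : Subgroup G) 1) :
    ∀ j : ℕ, ∀ g ∈ Subgroup.lowerCentralSeries (⊤ : Subgroup G) j,
      ∃ k : ℕ, 0 < k ∧ g ^ k ∈ Subgroup.lowerCentralSeries (⊤ : Subgroup G) (j + 1) :=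
  pow_in_next_lcs_of_generators_pow_in_commutator_general G n a hgen hpow
end
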